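/- Let u = (u₁,…,u_k) ∈ ℝ₊ᵏ. Then there is a low admissible path from u to a vector u⁺ = (u⁺₁,…,u⁺_k) ∈ ℝ₊ᵏ such that u⁺ ≤ u, u⁺_k ≤ u⁺_j for all j, and u⁺_k is indivisible (primitive) in the additive subgroup ⟨u⟩ ⊂ ℝ generated by u₁,…,u_k. -/

import Mathlib

/-- One admissible step: apply `P_{ij}`, `M_{ij}` or `I_{ij}` for some `i ≠ j`. -/
def AdmStep {k : ℕ} (v w : Fin k → ℝ) : Prop :=
  ∃ i j : Fin k, i ≠ j ∧
    (w = Function.update v i (v i + v j) ∨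
     w = Function.update v i (v i - v j) ∨
     w = v ∘ Equiv.swap i j)

/-- `v ≤ w` up to a permutation of the components. -/
def PermLE {k : ℕ} (v w : Fin k → ℝ) : Prop :=
  ∃ σ : Equiv.Perm (Fin k), ∀ i, v i ≤ w (σ i)

/-- A low admissible path from `d` to `e`: a finite sequence of positive vectors from
`d` to `e`, each step admissible, with every vector of the sequence `≤ d` or `≤ e`
in the componentwise-up-to-permutation order. -/
def LowAdmPath {k : ℕ} (d e : Fin k → ℝ) : Prop :=
  ∃ (l : ℕ) (f : ℕ → Fin k → ℝ),
    f 0 = d ∧ f l = e ∧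
    (∀ s < l, AdmStep (f s) (f (s + 1))) ∧
    (∀ s ≤ l, ∀ i, 0 < f s i) ∧
    (∀ s ≤ l, PermLE (f s) d ∨ PermLE (f s) e)

/-!
Admissible steps are invertible, so they preserve the group `⟨v⟩` generated by the components.
Let `μ = min u`. Subtractive Euclid steps, which only lower components, either make all
components equal, and then their common value generates `⟨u⟩`, or make them all `≤ μ / 2`.
In the second case take an indivisible `x ∈ ⟨u⟩` below them (it exists because divisibility
of a nonzero element of the free group `⟨u⟩` is bounded) and write `x = ∑ cᵢ vᵢ`. A step
`vₚ ← vₚ ∓ v_q` changes the coefficients by `c_q ← c_q ± cₚ`; choosing the step according to the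
signs of the coefficients lowers the lexicographic mass (negative part, positive part) of `c`
and keeps every component `≤ μ`, until `c` is supported at a single index, where indivisibility
forces that component to be `x`. Finally `x` is swapped to the last slot and added to every
smaller component, which stays `≤ μ` since `x ≤ μ / 2`.
-/

open Function Relation Finset

section Descent

variable {α : Type*} {r : α → α → Prop} {p q : α → Prop}

theorem exists_reflTransGen_of_measure_lt {β : Type*} [Preorder β] [WellFoundedLT β]
    (m : α → β) (h : ∀ a, q a → ¬ p a → ∃ b, ReflTransGen r a b ∧ q b ∧ m b < m a) :
    ∀ a, q a → ∃ b, ReflTransGen r a b ∧ q b ∧ p b := by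
  intro a
  induction a using (InvImage.wf m wellFounded_lt).induction with
  | _ a ih =>
    intro ha
    by_cases hpa : p a
    · exact ⟨a, .refl, ha, hpa⟩
    obtain ⟨b, hab, hb, hba⟩ := h a ha hpa
    obtain ⟨c, hbc, hc, hpc⟩ := ih b hba hb
    exact ⟨c, hab.trans hbc, hc, hpc⟩

theorem exists_reflTransGen_of_potential (φ : α → ℝ) {ε : ℝ} (hε : 0 < ε)
    (hφ : ∀ a, q a → 0 ≤ φ a) (h : ∀ a, q a → ¬ p a → ∃ b, r a b ∧ q b ∧ φ b + ε ≤ φ a) :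
    ∀ a, q a → ∃ b, ReflTransGen r a b ∧ q b ∧ p b := by
  refine exists_reflTransGen_of_measure_lt (fun a => ⌊φ a / ε⌋₊) fun a ha hpa => ?_
  obtain ⟨b, hab, hb, hφb⟩ := h a ha hpa
  have hdiv : φ b / ε + 1 ≤ φ a / ε := by
    rw [div_add_one hε.ne', div_le_div_iff_of_pos_right hε]
    exact hφb
  refine ⟨b, .single hab, hb, ?_⟩
  calc ⌊φ b / ε⌋₊ < ⌊φ b / ε⌋₊ + 1 := Nat.lt_succ_self _
    _ = ⌊φ b / ε + 1⌋₊ := (Nat.floor_add_one (div_nonneg (hφ b hb) hε.le)).symm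
    _ ≤ ⌊φ a / ε⌋₊ := Nat.floor_le_floor hdiv

theorem Relation.ReflTransGen.exists_seq {a b : α} (h : ReflTransGen r a b) :
    ∃ (l : ℕ) (f : ℕ → α), f 0 = a ∧ f l = b ∧ ∀ s < l, r (f s) (f (s + 1)) := by
  induction h using ReflTransGen.head_induction_on with
  | refl => exact ⟨0, fun _ => b, rfl, rfl, by simp⟩
  | @head a c hac _ ih =>
    obtain ⟨l, f, hf0, hfl, hf⟩ := ih
    refine ⟨l + 1, fun s => s.casesOn a f, rfl, hfl, fun s hs => ?_⟩
    cases s with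
    | zero => simpa [hf0] using hac
    | succ s => exact hf s (by omega)

end Descent

section Sums

variable {ι : Type*} [Fintype ι] [DecidableEq ι]

theorem sum_update_add_self {M : Type*} [AddCommMonoid M] (f : ι → M) (i : ι) (b : M) :
    ∑ l, update f i b l + f i = ∑ l, f l + b := by
  rw [sum_update_of_mem (mem_univ i), ← add_sum_erase _ _ (mem_univ i), sdiff_singleton_eq_erase]
  abel

theorem sum_update_smul {M : Type*} [AddCommGroup M] (c : ι → ℤ) (v : ι → M) (j : ι) (b : ℤ) :
    ∑ l, update c j b l • v l = ∑ l, c l • v l + (b - c j) • v j := by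
  have h := sum_update_add_self (fun l => c l • v l) j (b • v j)
  simp only [← apply_update (fun l (n : ℤ) => n • v l)] at h
  rw [sub_smul]
  linear_combination (norm := abel_nf) h

theorem sum_smul_update {M : Type*} [AddCommGroup M] (c : ι → ℤ) (v : ι → M) (i : ι) (a : M) :
    ∑ l, c l • update v i a l = ∑ l, c l • v l + c i • (a - v i) := by
  have h := sum_update_add_self (fun l => c l • v l) i (c i • a)
  simp only [← apply_update (fun l (w : M) => c l • w)] at h
  rw [smul_sub]
  linear_combination (norm := abel_nf) h

theorem sum_smul_transvection {M : Type*} [AddCommGroup M] (c : ι → ℤ) (v : ι → M) {i j : ι}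
    (hij : i ≠ j) (t : ℤ) :
    ∑ l, update c j (c j + t * c i) l • update v i (v i - t • v j) l = ∑ l, c l • v l := by
  rw [sum_update_smul, sum_smul_update, update_of_ne hij.symm]
  simp only [sub_sub_cancel_left, add_sub_cancel_left, smul_neg, mul_smul, smul_comm (c i) t]
  abel

theorem sum_le_add_of_nonpos {f : ι → ℝ} {i j : ι} (hij : i ≠ j)
    (h : ∀ l, l ≠ i → l ≠ j → f l ≤ 0) : ∑ l, f l ≤ f i + f j := by
  rw [← sum_sdiff (subset_univ {i, j}), sum_pair hij]
  have : ∑ l ∈ univ \ {i, j}, f l ≤ 0 :=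
    sum_nonpos fun l hl => by
      simp only [mem_sdiff, mem_univ, mem_insert, mem_singleton, true_and, not_or] at hl
      exact h l hl.1 hl.2
  linarith

end Sums

section Steps

variable {k : ℕ}

theorem AdmStep.symm {v w : Fin k → ℝ} (h : AdmStep v w) : AdmStep w v := by
  obtain ⟨i, j, hij, rfl | rfl | rfl⟩ := h
  · exact ⟨i, j, hij, .inr (.inl (by simp [update_of_ne hij.symm]))⟩
  · exact ⟨i, j, hij, .inl (by simp [update_of_ne hij.symm])⟩
  · exact ⟨i, j, hij, .inr (.inr (by ext; simp))⟩

theorem AdmStep.forall_mem {v w : Fin k → ℝ} (h : AdmStep v w) {G : AddSubgroup ℝ}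
    (hv : ∀ i, v i ∈ G) : ∀ i, w i ∈ G := by
  obtain ⟨i, j, -, rfl | rfl | rfl⟩ := h
  · exact (forall_update_iff v fun _ y => y ∈ G).2 ⟨add_mem (hv i) (hv j), fun l _ => hv l⟩
  · exact (forall_update_iff v fun _ y => y ∈ G).2 ⟨sub_mem (hv i) (hv j), fun l _ => hv l⟩
  · exact fun l => hv _

theorem AdmStep.closure_range_eq {v w : Fin k → ℝ} (h : AdmStep v w) :
    AddSubgroup.closure (Set.range w) = AddSubgroup.closure (Set.range v) := by
  have key : ∀ {v w : Fin k → ℝ}, AdmStep v w →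
      AddSubgroup.closure (Set.range w) ≤ AddSubgroup.closure (Set.range v) := fun h =>
    AddSubgroup.closure_le _ |>.2 <| Set.range_subset_iff.2 <|
      h.forall_mem fun i => AddSubgroup.subset_closure ⟨i, rfl⟩
  exact le_antisymm (key h) (key h.symm)

theorem PermLE.refl (v : Fin k → ℝ) : PermLE v v := ⟨1, fun _ => le_rfl⟩

theorem PermLE.update_of_le {v u : Fin k → ℝ} (h : PermLE v u) {i : Fin k} {a : ℝ}
    (ha : a ≤ v i) : PermLE (update v i a) u := by
  obtain ⟨σ, hσ⟩ := h
  exact ⟨σ, (forall_update_iff v fun l y => y ≤ u (σ l)).2 ⟨ha.trans (hσ i), fun l _ => hσ l⟩⟩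

theorem PermLE.update_of_forall_le {v u : Fin k → ℝ} (h : PermLE v u) {i : Fin k} {a : ℝ}
    (ha : ∀ j, a ≤ u j) : PermLE (update v i a) u := by
  obtain ⟨σ, hσ⟩ := h
  exact ⟨σ, (forall_update_iff v fun l y => y ≤ u (σ l)).2 ⟨ha _, fun l _ => hσ l⟩⟩

theorem PermLE.comp_perm {v u : Fin k → ℝ} (h : PermLE v u) (τ : Equiv.Perm (Fin k)) :
    PermLE (v ∘ τ) u := by
  obtain ⟨σ, hσ⟩ := h
  exact ⟨τ.trans σ, fun l => hσ (τ l)⟩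

/-- All paths built here stay below their starting point `u`, i.e. they use the first
alternative in the definition of `LowAdmPath`. -/
def IsLow (u v : Fin k → ℝ) : Prop := (∀ i, 0 < v i) ∧ PermLE v u

theorem isLow_self {u : Fin k → ℝ} (hu : ∀ i, 0 < u i) : IsLow u u := ⟨hu, .refl u⟩

theorem IsLow.update_of_le {u v : Fin k → ℝ} (h : IsLow u v) {i : Fin k} {a : ℝ}
    (ha₀ : 0 < a) (ha : a ≤ v i) : IsLow u (update v i a) :=
  ⟨(forall_update_iff v fun _ y => 0 < y).2 ⟨ha₀, fun l _ => h.1 l⟩, h.2.update_of_le ha⟩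

theorem IsLow.update_of_forall_le {u v : Fin k → ℝ} (h : IsLow u v) {i : Fin k} {a : ℝ}
    (ha₀ : 0 < a) (ha : ∀ j, a ≤ u j) : IsLow u (update v i a) :=
  ⟨(forall_update_iff v fun _ y => 0 < y).2 ⟨ha₀, fun l _ => h.1 l⟩, h.2.update_of_forall_le ha⟩

def LowStep (u v w : Fin k → ℝ) : Prop := AdmStep v w ∧ IsLow u w

variable {u v w : Fin k → ℝ} {i j : Fin k}

theorem lowStep_sub (h : IsLow u v) (hij : i ≠ j) (hv : v j < v i) :
    LowStep u v (update v i (v i - v j)) :=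
  ⟨⟨i, j, hij, .inr (.inl rfl)⟩, h.update_of_le (by linarith) (by linarith [h.1 j])⟩

theorem lowStep_add (h : IsLow u v) (hij : i ≠ j) (hle : ∀ l, v i + v j ≤ u l) :
    LowStep u v (update v i (v i + v j)) :=
  ⟨⟨i, j, hij, .inl rfl⟩, h.update_of_forall_le (by linarith [h.1 i, h.1 j]) hle⟩

theorem lowStep_swap (h : IsLow u v) (hij : i ≠ j) : LowStep u v (v ∘ Equiv.swap i j) :=
  ⟨⟨i, j, hij, .inr (.inr rfl)⟩, fun _ => h.1 _, h.2.comp_perm _⟩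

theorem IsLow.of_reflTransGen (h : ReflTransGen (LowStep u) v w) (hv : IsLow u v) :
    IsLow u w := by
  induction h with
  | refl => exact hv
  | tail _ hstep _ => exact hstep.2

theorem closure_range_eq_of_reflTransGen (h : ReflTransGen (LowStep u) v w) :
    AddSubgroup.closure (Set.range w) = AddSubgroup.closure (Set.range v) := by
  induction h with
  | refl => rfl
  | tail _ hstep ih => exact hstep.1.closure_range_eq.trans ih

theorem lowAdmPath_of_reflTransGen (hu : ∀ i, 0 < u i) (h : ReflTransGen (LowStep u) u w) :
    LowAdmPath u w := by
  obtain ⟨l, f, hf0, hfl, hf⟩ := h.exists_seq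
  have hlow : ∀ s ≤ l, IsLow u (f s) := by
    rintro (_ | s) hs
    · rw [hf0]; exact isLow_self hu
    · exact (hf s (by omega)).2
  exact ⟨l, f, hf0, hfl, fun s hs => (hf s hs).1, fun s hs => (hlow s hs).1,
    fun s hs => .inl (hlow s hs).2⟩

end Steps

section Reduction

variable {k : ℕ} {u v : Fin k → ℝ} {δ : ℝ}

/-- Subtractive Euclid: while every component is at least `δ`, subtracting a smaller component
from a larger one lowers the sum by at least `δ`. -/
theorem exists_lowReach_lt_or_const (hv : IsLow u v) (hδ : 0 < δ) :
    ∃ w, ReflTransGen (LowStep u) v w ∧ IsLow u w ∧ ((∃ t, w t < δ) ∨ ∀ i j, w i = w j) := by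
  refine exists_reflTransGen_of_potential (q := IsLow u) (fun w => ∑ i, w i) hδ
    (fun w hw => sum_nonneg fun i _ => (hw.1 i).le) (fun w hw hwp => ?_) v hv
  push Not at hwp
  obtain ⟨hδw, i₀, j₀, hne⟩ := hwp
  obtain ⟨i, j, hji⟩ : ∃ i j, w j < w i := by
    rcases hne.lt_or_gt with h | h
    exacts [⟨j₀, i₀, h⟩, ⟨i₀, j₀, h⟩]
  have hij : i ≠ j := fun h => hji.ne (h ▸ rfl)
  have hstep := lowStep_sub hw hij hji
  refine ⟨_, hstep, hstep.2, ?_⟩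
  have := sum_update_add_self w i (w i - w j)
  linarith [hδw j]

/-- Once some component `v t` is below `δ`, subtracting it repeatedly from the components above
`δ` lowers the sum by `v t` each time. -/
theorem exists_lowReach_forall_le (hv : IsLow u v) {t : Fin k} (ht : v t < δ) :
    ∃ w, ReflTransGen (LowStep u) v w ∧ ∀ i, w i ≤ δ := by
  have hdesc : ∀ w, IsLow u w ∧ w t = v t → ¬ (∀ i, w i ≤ δ) → ∃ w', LowStep u w w' ∧
      (IsLow u w' ∧ w' t = v t) ∧ ∑ i, w' i + v t ≤ ∑ i, w i := by
    rintro w ⟨hw, hwt⟩ hwp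
    push Not at hwp
    obtain ⟨l, hl⟩ := hwp
    have hlt : l ≠ t := by rintro rfl; linarith
    have hstep := lowStep_sub hw hlt (by linarith)
    refine ⟨_, hstep, ⟨hstep.2, by rw [update_of_ne hlt.symm, hwt]⟩, ?_⟩
    have := sum_update_add_self w l (w l - w t)
    linarith
  obtain ⟨w, hvw, -, hw⟩ := exists_reflTransGen_of_potential
    (q := fun w => IsLow u w ∧ w t = v t) (fun w => ∑ i, w i) (hv.1 t)
    (fun w hw => sum_nonneg fun i _ => (hw.1.1 i).le) hdesc v ⟨hv, rfl⟩
  exact ⟨w, hvw, hw⟩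

theorem exists_lowReach_le_or_const (hu : ∀ i, 0 < u i) (hδ : 0 < δ) :
    ∃ w, ReflTransGen (LowStep u) u w ∧ ((∀ i, w i ≤ δ) ∨ ∀ i j, w i = w j) := by
  obtain ⟨w, huw, hw, ⟨t, ht⟩ | hconst⟩ := exists_lowReach_lt_or_const (isLow_self hu) hδ
  · obtain ⟨w', hww', hw'⟩ := exists_lowReach_forall_le hw ht
    exact ⟨w', huw.trans hww', .inl hw'⟩
  · exact ⟨w, huw, .inr hconst⟩

end Reduction

section Indivisible

def IsIndivisible (Γ : AddSubgroup ℝ) (x : ℝ) : Prop :=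
  ∀ y ∈ Γ, ∀ n : ℕ, 0 < n → x = n • y → n = 1

/-- A nonzero coordinate of `γ` bounds every `d` with `γ ∈ d • M`. -/
theorem exists_forall_nsmul_eq_le {M : Type*} [AddCommGroup M] [Module.Free ℤ M] {γ : M}
    (hγ : γ ≠ 0) : ∃ B : ℕ, ∀ (y : M) (d : ℕ), γ = d • y → d ≤ B := by
  let b := Module.Free.chooseBasis ℤ M
  obtain ⟨i, hi⟩ : ∃ i, b.repr γ i ≠ 0 := by
    by_contra! h
    exact hγ (b.repr.injective (by ext i; simp [h i]))
  refine ⟨(b.repr γ i).natAbs, fun y d hy => Nat.le_of_dvd (Int.natAbs_pos.2 hi) ?_⟩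
  have hdvd : (d : ℤ) ∣ b.repr γ i := ⟨b.repr y i, by simp [hy]⟩
  simpa using Int.natAbs_dvd_natAbs.2 hdvd

theorem exists_isIndivisible_le (Γ : AddSubgroup ℝ) [AddGroup.FG Γ] {γ : ℝ} (hγΓ : γ ∈ Γ)
    (hγ : 0 < γ) : ∃ x ∈ Γ, 0 < x ∧ x ≤ γ ∧ IsIndivisible Γ x := by
  classical
  have : Module.Finite ℤ Γ := Module.Finite.iff_addGroup_fg.mpr ‹_›
  obtain ⟨B, hB⟩ := exists_forall_nsmul_eq_le (M := Γ) (γ := ⟨γ, hγΓ⟩)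
    (by simpa [← Subtype.coe_ne_coe] using hγ.ne')
  let P (d : ℕ) : Prop := ∃ y ∈ Γ, γ = d • y
  have hPB : ∀ d, P d → d ≤ B := fun d ⟨y, hyΓ, hy⟩ => hB ⟨y, hyΓ⟩ d (Subtype.ext hy)
  have hP1 : P 1 := ⟨γ, hγΓ, (one_nsmul γ).symm⟩
  have hd₀ : 1 ≤ Nat.findGreatest P B := Nat.le_findGreatest (hPB 1 hP1) hP1
  obtain ⟨y, hyΓ, hy⟩ := Nat.findGreatest_spec (hPB 1 hP1) hP1
  have hd₀' : (1 : ℝ) ≤ Nat.findGreatest P B := by exact_mod_cast hd₀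
  rw [nsmul_eq_mul] at hy
  have hy₀ : 0 < y := pos_of_mul_pos_right (hy ▸ hγ) (by positivity)
  refine ⟨y, hyΓ, hy₀, by nlinarith, fun z hzΓ e he hyz => ?_⟩
  have hPe : P (Nat.findGreatest P B * e) :=
    ⟨z, hzΓ, by rw [mul_nsmul', ← hyz, nsmul_eq_mul, hy]⟩
  have hle : Nat.findGreatest P B * e ≤ Nat.findGreatest P B * 1 :=
    (mul_one (Nat.findGreatest P B)).symm ▸ Nat.le_findGreatest (hPB _ hPe) hPe
  have := Nat.le_of_mul_le_mul_left hle hd₀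
  omega

theorem isIndivisible_closure_range_of_forall_eq {k : ℕ} {w : Fin k → ℝ} {e : ℝ} (he : e ≠ 0)
    (hw : ∀ i, w i = e) : IsIndivisible (AddSubgroup.closure (Set.range w)) e := by
  intro y hy d hd hey
  obtain ⟨a, rfl⟩ := AddSubgroup.mem_closure_range_iff_of_fintype.1 hy
  simp only [hw, zsmul_eq_mul, ← sum_mul, nsmul_eq_mul] at hey
  have h1 : ((d : ℤ) * ∑ i, a i : ℤ) = 1 := by
    have : (1 : ℝ) * e = (d * ∑ i, (a i : ℝ)) * e := by linear_combination hey
    exact_mod_cast (mul_right_cancel₀ he this).symm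
  exact_mod_cast Int.eq_one_of_mul_eq_one_right (Int.natCast_nonneg d) h1

end Indivisible

section Core

variable {k : ℕ} {u : Fin k → ℝ} {μ x : ℝ}

/-- The bound on the components with a negative coefficient lets two components lying below
such a component be added without exceeding `μ`. -/
structure IsLowRepr (u : Fin k → ℝ) (μ x : ℝ) (v : Fin k → ℝ) (c : Fin k → ℤ) : Prop where
  isLow : IsLow u v
  sum_eq : ∑ i, c i • v i = x
  neg_le : ∀ i, c i < 0 → 2 * v i ≤ μ

def coeffMass (c : Fin k → ℤ) : ℕ ×ₗ ℕ := toLex (∑ i, (-c i).toNat, ∑ i, (c i).toNat)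

theorem sum_toNat_update_add (g : ℤ → ℤ) (c : Fin k → ℤ) (j : Fin k) (b : ℤ) :
    ∑ i, (g (update c j b i)).toNat + (g (c j)).toNat = ∑ i, (g (c i)).toNat + (g b).toNat := by
  simpa only [← apply_update (fun _ n => (g n).toNat)] using
    sum_update_add_self (fun i => (g (c i)).toNat) j (g b).toNat

theorem coeffMass_update_lt {c : Fin k → ℤ} {j : Fin k} {b : ℤ}
    (h : (-b).toNat < (-c j).toNat ∨ (-b).toNat = (-c j).toNat ∧ b.toNat < (c j).toNat) :
    coeffMass (update c j b) < coeffMass c := by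
  have hneg := sum_toNat_update_add (fun n => -n) c j b
  have hpos := sum_toNat_update_add id c j b
  simp only [id] at hpos
  rw [coeffMass, coeffMass, Prod.Lex.toLex_lt_toLex]
  omega

variable {v : Fin k → ℝ} {c : Fin k → ℤ} {p q : Fin k}

theorem IsLowRepr.merge (h : IsLowRepr u μ x v c) (hp : 0 < c p) (hq : c q < 0)
    (hv : v q = v p) :
    IsLowRepr u μ x v (update (update c q (c q + c p)) p 0) ∧
      coeffMass (update (update c q (c q + c p)) p 0) < coeffMass c := by
  have hpq : p ≠ q := by rintro rfl; omega
  refine ⟨⟨h.isLow, ?_, fun i hi => ?_⟩, ?_⟩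
  · rw [sum_update_smul, sum_update_smul, update_of_ne hpq, hv, h.sum_eq, add_assoc, ← add_smul]
    simp
  · rcases eq_or_ne i p with rfl | hip
    · simp at hi
    rcases eq_or_ne i q with rfl | hiq
    · exact h.neg_le i hq
    · exact h.neg_le i (by simpa [hip, hiq] using hi)
  · calc coeffMass (update (update c q (c q + c p)) p 0)
        < coeffMass (update c q (c q + c p)) :=
          coeffMass_update_lt
            (.inr ⟨by simp [update_of_ne hpq]; omega, by simp [update_of_ne hpq, hp]⟩)
      _ < coeffMass c := coeffMass_update_lt (.inl (by omega))

theorem IsLowRepr.sub (h : IsLowRepr u μ x v c) (hpq : p ≠ q) (hv : v q < v p)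
    (hneg : c q + c p < 0 → 2 * v q ≤ μ) :
    LowStep u v (update v p (v p - v q)) ∧
      IsLowRepr u μ x (update v p (v p - v q)) (update c q (c q + c p)) := by
  have hstep := lowStep_sub h.isLow hpq hv
  refine ⟨hstep, hstep.2, ?_, fun i hi => ?_⟩
  · simpa using (sum_smul_transvection c v hpq 1).trans h.sum_eq
  rcases eq_or_ne i q with rfl | hiq
  · rw [update_of_ne hpq.symm]
    exact hneg (by simpa using hi)
  rw [update_of_ne hiq] at hi
  rcases eq_or_ne i p with rfl | hip
  · rw [update_self]
    linarith [h.neg_le i hi, h.isLow.1 q]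
  · rw [update_of_ne hip]
    exact h.neg_le i hi

theorem IsLowRepr.climb (h : IsLowRepr u μ x v c) (hμ : ∀ j, μ ≤ u j) (hpq : p ≠ q)
    (hp : 0 < c p) (hc : c p ≤ c q) (hv : v p + v q ≤ μ) :
    LowStep u v (update v p (v p + v q)) ∧
      IsLowRepr u μ x (update v p (v p + v q)) (update c q (c q - c p)) := by
  have hstep := lowStep_add h.isLow hpq fun j => hv.trans (hμ j)
  refine ⟨hstep, hstep.2, ?_, fun i hi => ?_⟩
  · simpa [sub_eq_add_neg] using (sum_smul_transvection c v hpq (-1)).trans h.sum_eq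
  rcases eq_or_ne i q with rfl | hiq
  · simp at hi; omega
  rw [update_of_ne hiq] at hi
  have hip : i ≠ p := by rintro rfl; omega
  rw [update_of_ne hip]
  exact h.neg_le i hi

theorem IsLowRepr.smul_nonpos (h : IsLowRepr u μ x v c) {i : Fin k} (hi : c i ≤ 0) :
    c i • v i ≤ 0 := by
  rw [zsmul_eq_mul]
  exact mul_nonpos_of_nonpos_of_nonneg (by exact_mod_cast hi) (h.isLow.1 i).le

theorem IsLowRepr.le_smul (h : IsLowRepr u μ x v c) {i : Fin k} (hi : 0 < c i) :
    v i ≤ c i • v i := by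
  rw [zsmul_eq_mul]
  exact le_mul_of_one_le_left (h.isLow.1 i).le (by exact_mod_cast hi)

theorem IsLowRepr.exists_next (h : IsLowRepr u μ x v c) (hμ : ∀ j, μ ≤ u j) (hx : 0 < x)
    (hxμ : x ≤ μ) (hc : ¬ ∃ i, ∀ l, l ≠ i → c l = 0) :
    ∃ v' c', ReflGen (LowStep u) v v' ∧ IsLowRepr u μ x v' c' ∧ coeffMass c' < coeffMass c := by
  by_cases hsub : ∃ p q, 0 < c p ∧ c q < 0 ∧ v q ≤ v p
  · obtain ⟨p, q, hp, hq, hvqp⟩ := hsub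
    have hpq : p ≠ q := by rintro rfl; omega
    rcases hvqp.eq_or_lt with hv | hv
    · exact ⟨v, _, .refl, h.merge hp hq hv⟩
    · obtain ⟨hstep, h'⟩ := h.sub hpq hv fun _ => h.neg_le q hq
      exact ⟨_, _, .single hstep, h', coeffMass_update_lt (.inl (by omega))⟩
  push Not at hsub
  by_cases hclimb : ∃ p q, p ≠ q ∧ 0 < c p ∧ 0 < c q
  · obtain ⟨p, q, hpq, hp, hq⟩ := hclimb
    have hv : v p + v q ≤ μ := by
      by_cases hneg : ∃ j, c j < 0
      · obtain ⟨j, hj⟩ := hneg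
        linarith [hsub p j hp hj, hsub q j hq hj, h.neg_le j hj]
      · push Not at hneg
        have := add_le_sum (f := fun l => c l • v l) (fun l _ => by
          rw [zsmul_eq_mul]; exact mul_nonneg (by exact_mod_cast hneg l) (h.isLow.1 l).le)
          (mem_univ p) (mem_univ q) hpq
        linarith [h.le_smul hp, h.le_smul hq, h.sum_eq]
    rcases le_total (c p) (c q) with hle | hle
    · obtain ⟨hstep, h'⟩ := h.climb hμ hpq hp hle hv
      exact ⟨_, _, .single hstep, h', coeffMass_update_lt (.inr (by omega))⟩
    · obtain ⟨hstep, h'⟩ := h.climb hμ hpq.symm hq hle (by linarith)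
      exact ⟨_, _, .single hstep, h', coeffMass_update_lt (.inr (by omega))⟩
  push Not at hclimb
  obtain ⟨s, hs⟩ : ∃ s, 0 < c s := by
    by_contra! hneg
    linarith [h.sum_eq, sum_nonpos fun l (_ : l ∈ univ) => h.smul_nonpos (hneg l)]
  obtain ⟨j, hjs, hj0⟩ : ∃ j, j ≠ s ∧ c j ≠ 0 := by simpa using not_exists.1 hc s
  have hj : c j < 0 := lt_of_le_of_ne (hclimb s j hjs.symm hs) hj0
  have hvsj := hsub s j hs hj
  -- `x > 0` forces the positive coefficient to outweigh each negative one
  have hbudget : 0 ≤ c s + c j := by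
    by_contra! hneg
    have hle : x ≤ c s • v s + c j • v j := h.sum_eq ▸
      sum_le_add_of_nonpos (f := fun l => c l • v l) hjs.symm fun l hls _ =>
        h.smul_nonpos (hclimb s l (Ne.symm hls) hs)
    rw [zsmul_eq_mul, zsmul_eq_mul] at hle
    have hneg' : (c s : ℝ) + c j ≤ -1 := by exact_mod_cast (by omega : c s + c j ≤ -1)
    have hs' : (0 : ℝ) < c s := by exact_mod_cast hs
    linarith [mul_lt_mul_of_pos_left hvsj hs', mul_le_mul_of_nonneg_right hneg' (h.isLow.1 j).le,
      h.isLow.1 j]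
  obtain ⟨hstep, h'⟩ := h.sub hjs hvsj fun h => absurd h (by omega)
  exact ⟨_, _, .single hstep, h', coeffMass_update_lt (.inr ⟨by omega, by omega⟩)⟩

theorem eq_of_sum_smul_eq_of_isIndivisible {Γ : AddSubgroup ℝ} {w : Fin k → ℝ} {i : Fin k}
    (hsum : ∑ l, c l • w l = x) (hc : ∀ l, l ≠ i → c l = 0) (hx : 0 < x) (hw : 0 < w i)
    (hwΓ : w i ∈ Γ) (hind : IsIndivisible Γ x) : w i = x := by
  rw [sum_eq_single i (fun l _ hl => by rw [hc l hl, zero_smul]) (by simp)] at hsum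
  have hci : 0 < c i := by
    have : (0 : ℝ) < c i := pos_of_mul_pos_left (by rwa [← zsmul_eq_mul, hsum]) hw.le
    exact_mod_cast this
  have hsum' : x = (c i).toNat • w i := by
    rw [← natCast_zsmul, Int.toNat_of_nonneg hci.le, hsum]
  have := hind (w i) hwΓ _ (by omega) hsum'
  rw [hsum', this, one_nsmul]

theorem IsLowRepr.exists_reflTransGen_apply_eq (h : IsLowRepr u μ x v c) (hμ : ∀ j, μ ≤ u j)
    (hx : 0 < x) (hxμ : x ≤ μ) (hind : IsIndivisible (AddSubgroup.closure (Set.range v)) x) :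
    ∃ w i, ReflTransGen (LowStep u) v w ∧ w i = x := by
  obtain ⟨⟨w, c'⟩, hvw, h', i, hi⟩ := exists_reflTransGen_of_measure_lt
    (r := fun a b => ReflGen (LowStep u) a.1 b.1) (q := fun a => IsLowRepr u μ x a.1 a.2)
    (p := fun a => ∃ i, ∀ l, l ≠ i → a.2 l = 0) (fun a => coeffMass a.2)
    (fun a ha hpa => by
      obtain ⟨v', c', hstep, h', hm⟩ := ha.exists_next hμ hx hxμ hpa
      exact ⟨(v', c'), .single hstep, h', hm⟩) (v, c) h
  have hvw' : ReflTransGen (LowStep u) v w := by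
    simpa using ReflTransGen.lift Prod.fst (fun _ _ h => h) _ _ hvw
  have hwΓ : w i ∈ AddSubgroup.closure (Set.range v) :=
    closure_range_eq_of_reflTransGen hvw' ▸ AddSubgroup.subset_closure ⟨i, rfl⟩
  exact ⟨w, i, hvw',
    eq_of_sum_smul_eq_of_isIndivisible h'.sum_eq hi hx (h'.isLow.1 i) hwΓ hind⟩

end Core

section Main

variable {k : ℕ} {u : Fin (k + 1) → ℝ}

theorem exists_lowReach_last_eq_le {v : Fin (k + 1) → ℝ} {μ x : ℝ} {i : Fin (k + 1)}
    (hv : IsLow u v) (hvi : v i = x) (hμ : ∀ j, μ ≤ u j) (hx : 2 * x ≤ μ) :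
    ∃ w, ReflTransGen (LowStep u) v w ∧ w (Fin.last k) = x ∧ ∀ j, x ≤ w j := by
  obtain ⟨v', hvv', hv'⟩ : ∃ v', ReflTransGen (LowStep u) v v' ∧ v' (Fin.last k) = x := by
    rcases eq_or_ne i (Fin.last k) with rfl | hi
    · exact ⟨v, .refl, hvi⟩
    · exact ⟨_, .single (lowStep_swap hv hi), by simpa using hvi⟩
  have key : ∀ s : Finset (Fin (k + 1)), ∃ w, ReflTransGen (LowStep u) v' w ∧
      w (Fin.last k) = x ∧ ∀ j ∈ s, x ≤ w j := by
    intro s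
    induction s using Finset.induction_on with
    | empty => exact ⟨v', .refl, hv', by simp⟩
    | insert a s _ ih =>
      obtain ⟨w, hv'w, hwx, hws⟩ := ih
      have hw := (hv.of_reflTransGen hvv').of_reflTransGen hv'w
      by_cases hxa : x ≤ w a
      · exact ⟨w, hv'w, hwx, forall_mem_insert _ _ _ |>.2 ⟨hxa, hws⟩⟩
      push Not at hxa
      have hal : a ≠ Fin.last k := by rintro rfl; linarith
      have hstep := lowStep_add hw hal fun l => by linarith [hμ l]
      refine ⟨_, hv'w.tail hstep, by rw [update_of_ne hal.symm, hwx], fun j hj => ?_⟩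
      rcases eq_or_ne j a with rfl | hja
      · rw [update_self, hwx]; linarith [hw.1 j]
      · rw [update_of_ne hja]; exact hws j ((mem_insert.1 hj).resolve_left hja)
  obtain ⟨w, hv'w, hwx, hw⟩ := key univ
  exact ⟨w, hvv'.trans hv'w, hwx, fun j => hw j (mem_univ j)⟩

theorem exists_lowReach_last_min_isIndivisible (hu : ∀ i, 0 < u i) :
    ∃ w, ReflTransGen (LowStep u) u w ∧ (∀ j, w (Fin.last k) ≤ w j) ∧
      IsIndivisible (AddSubgroup.closure (Set.range u)) (w (Fin.last k)) := by
  obtain ⟨i₀, hμ⟩ := Finite.exists_min u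
  obtain ⟨w, huw, hsmall_or_const⟩ := exists_lowReach_le_or_const hu (half_pos (hu i₀))
  have hΓ := closure_range_eq_of_reflTransGen huw
  have hw := (isLow_self hu).of_reflTransGen huw
  rcases hsmall_or_const with hsmall | hconst
  · obtain ⟨x, hxΓ, hx, hxw, hind⟩ := exists_isIndivisible_le
      (AddSubgroup.closure (Set.range w)) (AddSubgroup.subset_closure (Set.mem_range_self 0))
      (hw.1 0)
    obtain ⟨c, hc⟩ := AddSubgroup.mem_closure_range_iff_of_fintype.1 hxΓ
    have hrepr : IsLowRepr u (u i₀) x w c := ⟨hw, hc.symm, fun i _ => by linarith [hsmall i]⟩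
    obtain ⟨w', i, hww', hw'i⟩ :=
      hrepr.exists_reflTransGen_apply_eq hμ hx (by linarith [hsmall 0, hu i₀]) hind
    obtain ⟨w'', hw'w'', hlast, hmin⟩ :=
      exists_lowReach_last_eq_le (hw.of_reflTransGen hww') hw'i hμ (by linarith [hsmall 0])
    exact ⟨w'', huw.trans (hww'.trans hw'w''), hlast ▸ hmin, hΓ ▸ hlast ▸ hind⟩
  · exact ⟨w, huw, fun j => (hconst _ _).le,
      hΓ ▸ isIndivisible_closure_range_of_forall_eq (hw.1 _).ne' fun i => hconst i _⟩

end Main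

/-- **Lemma B.7 of Chekanov–Schlenk.** From any `u ∈ ℝ₊ᵏ` there is a low admissible
path to a vector `u⁺ ∈ ℝ₊ᵏ` with `u⁺ ≤ u`, whose last component is the smallest one
and is indivisible (primitive) in the additive subgroup of `ℝ` generated by the
components of `u`. -/
theorem lowAdmPath_to_indivisible
    (k : ℕ) (u : Fin (k + 1) → ℝ) (hu : ∀ i, 0 < u i) :
    ∃ uplus : Fin (k + 1) → ℝ,
      (∀ i, 0 < uplus i) ∧
      LowAdmPath u uplus ∧
      PermLE uplus u ∧
      (∀ j, uplus (Fin.last k) ≤ uplus j) ∧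
      uplus (Fin.last k) ∈ AddSubgroup.closure (Set.range u) ∧
      (∀ y ∈ AddSubgroup.closure (Set.range u), ∀ n : ℕ, 0 < n →
        uplus (Fin.last k) = n • y → n = 1) := by
  obtain ⟨w, huw, hmin, hind⟩ := exists_lowReach_last_min_isIndivisible hu
  have hw := (isLow_self hu).of_reflTransGen huw
  refine ⟨w, hw.1, lowAdmPath_of_reflTransGen hu huw, hw.2, hmin, ?_, hind⟩
  rw [← closure_range_eq_of_reflTransGen huw]
  exact AddSubgroup.subset_closure ⟨_, rfl⟩
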